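/- arXiv:math/0202084 — 11 statements merged into one kernel-verified Lean document; each statement's English description precedes it below -/
import Mathlib

section
/- Let X be a rack, Y ⊆ X a nonempty proper subset and Z = X \ Y. Then the following are equivalent: (1) Y and Z are both subracks (i.e. Y ▷ Y ⊆ Y and Z ▷ Z ⊆ Z, giving a decomposition of X); (2) Y ▷ Z ⊆ Z and Z ▷ Y ⊆ Y; (3) X ▷ Y ⊆ Y. -/
/-- A rack: every left translation is bijective and ▷ is left self-distributive. -/
def IsRack (X : Type*) (op : X → X → X) : Prop :=
  (∀ x, Function.Bijective (op x)) ∧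
  ∀ i j k, op i (op j k) = op (op i j) (op i k)

lemma inj_mapsTo_compl {X : Type*} [Finite X] {f : X → X} (hf : Function.Injective f)
    {Y : Set X} (h : ∀ b ∈ Y, f b ∈ Y) : ∀ b ∈ Yᶜ, f b ∈ Yᶜ := by
  have himg : f '' Y = Y := by
    apply Set.eq_of_subset_of_ncard_le
    · rintro _ ⟨y, hy, rfl⟩; exact h y hy
    · rw [Set.ncard_image_of_injective _ hf]
    · exact Set.toFinite Y
  intro b hb hfb
  rw [← himg] at hfb
  obtain ⟨y, hy, hyb⟩ := hfb
  exact hb (hf hyb ▸ hy)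

lemma inj_mapsTo_of_compl {X : Type*} [Finite X] {f : X → X} (hf : Function.Injective f)
    {Y : Set X} (h : ∀ b ∈ Yᶜ, f b ∈ Yᶜ) : ∀ b ∈ Y, f b ∈ Y := by
  have := inj_mapsTo_compl hf h
  simpa using this

/-- For a finite rack `X`, a nonempty proper subset `Y` with complement `Z = Yᶜ`:
(1) `Y ▷ Y ⊆ Y` and `Z ▷ Z ⊆ Z` (a decomposition), (2) `Y ▷ Z ⊆ Z` and `Z ▷ Y ⊆ Y`,
and (3) `X ▷ Y ⊆ Y` are all equivalent. -/
theorem rack_decomposition_tfae {X : Type*} [Finite X] (op : X → X → X)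
    (h : IsRack X op) (Y : Set X) (hne : Y.Nonempty) (hprop : Y ≠ Set.univ) :
    ((∀ a ∈ Y, ∀ b ∈ Y, op a b ∈ Y) ∧ (∀ a ∈ Yᶜ, ∀ b ∈ Yᶜ, op a b ∈ Yᶜ) ↔
      ∀ (a : X), ∀ b ∈ Y, op a b ∈ Y) ∧
    ((∀ a ∈ Y, ∀ b ∈ Yᶜ, op a b ∈ Yᶜ) ∧ (∀ a ∈ Yᶜ, ∀ b ∈ Y, op a b ∈ Y) ↔
      ∀ (a : X), ∀ b ∈ Y, op a b ∈ Y) := by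
  have hinj : ∀ a, Function.Injective (op a) := fun a => (h.1 a).1
  constructor
  · constructor
    · rintro ⟨h1, h2⟩ a b hb
      by_cases ha : a ∈ Y
      · exact h1 a ha b hb
      · exact inj_mapsTo_of_compl (hinj a) (h2 a ha) b hb
    · intro h3
      exact ⟨fun a _ => h3 a, fun a _ => inj_mapsTo_compl (hinj a) (h3 a)⟩
  · constructor
    · rintro ⟨h1, h2⟩ a b hb
      by_cases ha : a ∈ Y
      · exact inj_mapsTo_of_compl (hinj a) (h1 a ha) b hb
      · exact h2 a ha b hb
    · intro h3
      exact ⟨fun a _ => inj_mapsTo_compl (hinj a) (h3 a), fun a _ => h3 a⟩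
end

section
/- Let X be a rack and φ : X → Sym(X) the map x ↦ φ_x. For x, y in the image of φ, the fibers φ⁻¹(y) and φ⁻¹(φ_x ▷ y) have the same cardinality, where φ_x ▷ y = φ_x y φ_x⁻¹. Consequently, if X is an indecomposable finite rack, all fibers of φ have the same cardinality. -/
/-- A rack is indecomposable if it admits no decomposition into two nonempty subracks. -/
def RackIndecomposable (X : Type*) (op : X → X → X) : Prop :=
  ¬ ∃ Y : Set X, Y.Nonempty ∧ Yᶜ.Nonempty ∧
      (∀ a ∈ Y, ∀ b ∈ Y, op a b ∈ Y) ∧ (∀ a ∈ Yᶜ, ∀ b ∈ Yᶜ, op a b ∈ Yᶜ)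

theorem rack_fiber_aux {X : Type*} (op : X → X → X) (h : IsRack X op)
    (x : X) (y : X → X) (hy : ∃ z, op z = y) :
    Nat.card {w : X | op w = y} =
      Nat.card {w : X | ∀ a, op w (op x a) = op x (y a)} := by
  obtain ⟨hb, hd⟩ := h
  refine Nat.card_congr (Equiv.subtypeEquiv (Equiv.ofBijective (op x) (hb x)) ?_)
  intro w
  constructor
  · rintro rfl a
    simp only [Equiv.ofBijective_apply]
    exact (hd x w a).symm
  · intro hw
    funext a
    apply (hb x).1
    have := hw a
    simp only [Equiv.ofBijective_apply] at this
    rw [← this, ← hd x w a]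

theorem rack_fiber_step {X : Type*} (op : X → X → X) (h : IsRack X op)
    (x z : X) :
    Nat.card {a : X | op a = op z} = Nat.card {a : X | op a = op (op x z)} := by
  rw [rack_fiber_aux op h x (op z) ⟨z, rfl⟩]
  have hset : {w : X | ∀ a, op w (op x a) = op x (op z a)} = {a : X | op a = op (op x z)} := by
    ext w
    simp only [Set.mem_setOf_eq]
    constructor
    · intro hw
      funext b
      obtain ⟨a, rfl⟩ := (h.1 x).2 b
      rw [hw a, h.2 x z a]
    · rintro hw a
      rw [hw, ← h.2 x z a]
  rw [hset]

/-- For `y = φ_z` in the image of `φ : X → X^X`, the fiber of `φ` over `y` and the fiber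
over `φ_x ▷ y = φ_x y φ_x⁻¹` (characterized by `φ_w ∘ φ_x = φ_x ∘ y`) have the same
cardinality; consequently in an indecomposable finite rack all fibers of `φ` have the
same cardinality. -/
theorem rack_fibers_card {X : Type*} (op : X → X → X) (h : IsRack X op) :
    (∀ (x : X) (y : X → X), (∃ z, op z = y) →
      Nat.card {w : X | op w = y} =
        Nat.card {w : X | ∀ a, op w (op x a) = op x (y a)}) ∧
    (Finite X → RackIndecomposable X op →
      ∀ z w : X, Nat.card {a : X | op a = op z} = Nat.card {a : X | op a = op w}) := by
  constructor
  · exact rack_fiber_aux op h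
  · intro _ hind z w
    by_contra hne
    apply hind
    refine ⟨{w : X | Nat.card {a : X | op a = op w} = Nat.card {a : X | op a = op z}},
      ⟨z, rfl⟩, ⟨w, fun hw => hne hw.symm⟩, ?_, ?_⟩
    · intro a _ b hb
      show Nat.card {c : X | op c = op (op a b)} = _
      rw [← rack_fiber_step op h a b]
      exact hb
    · intro a _ b hb
      intro hmem
      apply hb
      show Nat.card {c : X | op c = op b} = _
      rw [rack_fiber_step op h a b]
      exact hmem
end

section
/- Let X be a rack, S a nonempty set, and α : X × X → Fun(S × S, S) a function, writing α_{ij}(s)(t) = α_{ij}(s,t). Then the operation (i,s) ▷ (j,t) = (i ▷ j, α_{ij}(s,t)) makes X × S a rack if and only if (a) each α_{ij}(s) : S → S is a bijection, and (b) α_{i, j▷k}(s) ∘ α_{j,k}(t) = α_{i▷j, i▷k}(α_{ij}(s,t)) ∘ α_{i,k}(s) for all i,j,k ∈ X and s,t ∈ S. -/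
/-- For a rack `X` and a nonempty set `S`, the operation
`(i,s) ▷ (j,t) = (i ▷ j, α i j s t)` makes `X × S` a rack if and only if each
`α i j s : S → S` is a bijection and `α` satisfies the dynamical cocycle condition. -/
theorem extension_rack_iff_dynamical_cocycle {X S : Type*} [Nonempty S]
    (op : X → X → X) (h : IsRack X op) (α : X → X → S → S → S) :
    IsRack (X × S) (fun p q => (op p.1 q.1, α p.1 q.1 p.2 q.2)) ↔
      ((∀ i j s, Function.Bijective (α i j s)) ∧
        ∀ i j k s t u,
          α i (op j k) s (α j k t u) =
            α (op i j) (op i k) (α i j s t) (α i k s u)) := by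
  obtain ⟨hbij, hdist⟩ := h
  constructor
  · rintro ⟨hbij', hdist'⟩
    constructor
    · intro i j s
      constructor
      · intro t t' htt
        have := (hbij' (i, s)).1 (a₁ := (j, t)) (a₂ := (j, t'))
          (by simpa using htt)
        exact (Prod.mk.injEq _ _ _ _ ▸ this).2
      · intro u
        obtain ⟨⟨j', t⟩, hjt⟩ := (hbij' (i, s)).2 (op i j, u)
        simp only [Prod.mk.injEq] at hjt
        have hj : j' = j := (hbij i).1 hjt.1
        exact ⟨t, by rw [← hj]; exact hjt.2⟩
    · intro i j k s t u
      have := hdist' (i, s) (j, t) (k, u)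
      simp only [Prod.mk.injEq] at this
      exact this.2
  · rintro ⟨hαbij, hcoc⟩
    constructor
    · rintro ⟨i, s⟩
      constructor
      · rintro ⟨j, t⟩ ⟨j', t'⟩ hjt
        simp only [Prod.mk.injEq] at hjt
        obtain ⟨h1, h2⟩ := hjt
        have hj : j = j' := (hbij i).1 h1
        subst hj
        exact Prod.ext rfl ((hαbij i j s).1 h2)
      · rintro ⟨k, u⟩
        obtain ⟨j, hj⟩ := (hbij i).2 k
        obtain ⟨t, ht⟩ := (hαbij i j s).2 u
        exact ⟨(j, t), by simp [hj, ht]⟩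
    · rintro ⟨i, s⟩ ⟨j, t⟩ ⟨k, u⟩
      simp only [Prod.mk.injEq]
      exact ⟨hdist i j k, hcoc i j k s t u⟩
end

section
/- Let X be a quandle with dynamical cocycle α making X ×_α S a quandle. For each i ∈ X define s ▷_i t := α_{ii}(s,t). Then (S, ▷_i) is a quandle for every i ∈ X, and for all i,j ∈ X and s ∈ S the map α_{ij}(s) : (S, ▷_j) → (S, ▷_{i▷j}) is an isomorphism of quandles. -/
/-- Let `X` be a quandle and `α` a quandle dynamical cocycle with values in `S`.
Setting `s ▷_i t := α i i s t`, each `(S, ▷_i)` is a quandle, and each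
`α i j s : (S, ▷_j) → (S, ▷_{i▷j})` is an isomorphism of quandles. -/
theorem dynamical_cocycle_fiber_quandles {X S : Type*} (op : X → X → X)
    (h : IsRack X op) (hq : ∀ x, op x x = x)
    (α : X → X → S → S → S)
    (hbij : ∀ i j s, Function.Bijective (α i j s))
    (hcoc : ∀ i j k s t u,
      α i (op j k) s (α j k t u) =
        α (op i j) (op i k) (α i j s t) (α i k s u))
    (hid : ∀ i s, α i i s s = s) :
    (∀ i : X, IsRack S (fun s t => α i i s t) ∧ ∀ s, α i i s s = s) ∧
    (∀ (i j : X) (s : S), Function.Bijective (α i j s) ∧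
      ∀ t u, α i j s (α j j t u) =
        α (op i j) (op i j) (α i j s t) (α i j s u)) := by
  refine ⟨fun i => ⟨⟨fun s => hbij i i s, fun s t u => ?_⟩, hid i⟩,
    fun i j s => ⟨hbij i j s, fun t u => ?_⟩⟩
  · have := hcoc i i i s t u
    rwa [hq i] at this
  · have := hcoc i j j s t u
    rwa [hq j] at this
end

section
/- Let f : X → Y be a surjective morphism of racks such that all fibers f⁻¹(y) have the same cardinality, equal to that of a set S. Then X is isomorphic as a rack to an extension Y ×_α S for some dynamical cocycle α, with f corresponding to the canonical projection. -/
/-- If `f : X → Y` is a surjective rack morphism whose fibers all have the cardinality of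
a set `S`, then `X` is isomorphic to an extension `Y ×_α S` for some dynamical cocycle
`α`, with `f` corresponding to the canonical projection. -/
theorem surjection_is_extension {X Y S : Type*} (opX : X → X → X)
    (opY : Y → Y → Y) (hX : IsRack X opX) (hY : IsRack Y opY)
    (f : X → Y) (hf : Function.Surjective f)
    (hmor : ∀ a b, f (opX a b) = opY (f a) (f b))
    (hfib : ∀ y : Y, Nonempty (f ⁻¹' {y} ≃ S)) :
    ∃ α : Y → Y → S → S → S,
      (∀ i j s, Function.Bijective (α i j s)) ∧
      (∀ i j k s t u,
        α i (opY j k) s (α j k t u) =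
          α (opY i j) (opY i k) (α i j s t) (α i k s u)) ∧
      ∃ T : X ≃ Y × S,
        (∀ a b, T (opX a b) =
          (opY (T a).1 (T b).1, α (T a).1 (T b).1 (T a).2 (T b).2)) ∧
        ∀ a, (T a).1 = f a := by
  classical
  have g : ∀ y : Y, f ⁻¹' {y} ≃ S := fun y => (hfib y).some
  have hval : ∀ (y : Y) (a : f ⁻¹' {y}), f a.val = y := fun y a => a.2
  have hmem : ∀ (i j : Y) (a : f ⁻¹' {i}) (b : f ⁻¹' {j}),
      opX a.val b.val ∈ f ⁻¹' {opY i j} := by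
    intro i j a b
    have : f (opX a.val b.val) = opY i j := by rw [hmor, hval, hval]
    simpa [Set.mem_preimage] using this
  have gcongr : ∀ (y y' : Y) (h : y = y') (a : f ⁻¹' {y}) (b : f ⁻¹' {y'}),
      a.val = b.val → g y a = g y' b := by
    rintro y _ rfl a b hab
    exact congrArg (g y) (Subtype.ext hab)
  set α : Y → Y → S → S → S := fun i j s t =>
    g (opY i j) ⟨opX ((g i).symm s).val ((g j).symm t).val,
      hmem i j ((g i).symm s) ((g j).symm t)⟩ with hα
  refine ⟨α, ?_, ?_, ?_⟩
  · -- bijectivity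
    intro i j s
    constructor
    · intro t u h
      simp only [hα] at h
      have h2 := congrArg (g (opY i j)).symm h
      simp only [Equiv.symm_apply_apply] at h2
      have h3 : opX ((g i).symm s).val ((g j).symm t).val =
          opX ((g i).symm s).val ((g j).symm u).val := congrArg Subtype.val h2
      have h4 : ((g j).symm t).val = ((g j).symm u).val :=
        (hX.1 _).1 h3
      have h5 : (g j).symm t = (g j).symm u := Subtype.ext h4
      simpa using congrArg (g j) h5
    · intro v
      obtain ⟨b, hb⟩ := (hX.1 ((g i).symm s).val).2 ((g (opY i j)).symm v).val
      have hfb : f b = j := by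
        have h1 : f (opX ((g i).symm s).val b) = opY i (f b) := by
          rw [hmor, hval]
        rw [hb, hval] at h1
        exact (hY.1 i).1 h1.symm
      refine ⟨g j ⟨b, hfb⟩, ?_⟩
      simp only [hα, Equiv.symm_apply_apply]
      have : (⟨opX ((g i).symm s).val b, hmem i j ((g i).symm s) ⟨b, hfb⟩⟩ :
          f ⁻¹' {opY i j}) = (g (opY i j)).symm v := Subtype.ext hb
      rw [this, Equiv.apply_symm_apply]
  · -- cocycle
    intro i j k s t u
    simp only [hα, Equiv.symm_apply_apply]
    exact gcongr _ _ (hY.2 i j k) _ _ (hX.2 _ _ _)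
  · -- the equivalence
    set T : X ≃ Y × S := (Equiv.sigmaFiberEquiv f).symm.trans
      ((Equiv.sigmaCongrRight (fun y => g y)).trans (Equiv.sigmaEquivProd Y S)) with hT
    have hTval : ∀ x : X, T x = (f x, g (f x) ⟨x, rfl⟩) := fun x => rfl
    refine ⟨T, ?_, ?_⟩
    · intro a b
      rw [hTval, hTval, hTval]
      refine Prod.ext (hmor a b) ?_
      simp only [hα, Equiv.symm_apply_apply]
      exact gcongr _ _ (hmor a b) _ _ rfl
    · intro a
      rw [hTval]
end

section
/- A group object in the category of racks is precisely a triple (G, s, t) where G is a group, s ∈ Aut(G), t : G → Z(G) is a group homomorphism into the center, st = ts, and s(x)x⁻¹t(x) ∈ ker(t) for all x ∈ G; the rack structure is x ▷ y = t(x)s(y). Such a group object is a quandle if and only if t(x) = s(x)⁻¹x for all x. -/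
/-- A group object in the category of racks (a group `G` with a rack operation whose
multiplication is a rack morphism) is precisely given by a triple `(G, s, t)` with
`s` a group automorphism, `t` a homomorphism into the center, `s t = t s`,
`s(x) x⁻¹ t(x) ∈ ker t` for all `x`, and `x ▷ y = t(x) s(y)`.  Moreover, such a
group object is a quandle iff `t(x) = s(x)⁻¹ x` for all `x`
(here `s x = 1 ▷ x` and `t x = x ▷ 1`). -/
theorem group_object_in_racks {G : Type*} [Group G] (op : G → G → G) :
    ((IsRack G op ∧ ∀ a b c d, op (a * b) (c * d) = op a c * op b d) ↔
      ∃ (s : G →* G) (t : G →* G),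
        Function.Bijective s ∧
        (∀ x y, t x * y = y * t x) ∧
        (∀ x, s (t x) = t (s x)) ∧
        (∀ x, t (s x * x⁻¹ * t x) = 1) ∧
        (∀ x y, op x y = t x * s y)) ∧
    ((IsRack G op ∧ ∀ a b c d, op (a * b) (c * d) = op a c * op b d) →
      ((∀ x, op x x = x) ↔ ∀ x, op x 1 = (op 1 x)⁻¹ * x)) := by
  constructor
  · constructor
    · rintro ⟨⟨hbij, hsd⟩, hM⟩
      have h1 : op 1 1 = 1 := by
        have h := hM 1 1 1 1
        simp only [mul_one, one_mul] at h
        exact (mul_left_cancel (a := op 1 1) (by rw [mul_one]; exact h)).symm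
      have hA : ∀ x z, op x z = op x 1 * op 1 z := fun x z => by
        simpa using hM x 1 1 z
      have hB : ∀ x z, op x z = op 1 z * op x 1 := fun x z => by
        simpa using hM 1 x z 1
      have hmul : ∀ a b, op (a * b) 1 = op a 1 * op b 1 := fun a b => by
        simpa using hM a b 1 1
      have hc : ∀ x y, op x 1 * y = y * op x 1 := by
        intro x y
        obtain ⟨z, rfl⟩ := (hbij 1).2 y
        rw [← hA x z, ← hB x z]
      have hts : ∀ x, op 1 (op x 1) = op (op 1 x) 1 := by
        intro x
        have h := hsd 1 x 1
        rwa [h1] at h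
      have hinv : ∀ x, op x⁻¹ 1 = (op x 1)⁻¹ := by
        intro x
        have h := hM x x⁻¹ 1 1
        rw [mul_inv_cancel, mul_one, h1] at h
        exact eq_inv_of_mul_eq_one_right h.symm
      have hkey : ∀ x, op x 1 = op (op x 1) 1 * op (op 1 x) 1 := by
        intro x
        have h := hsd x 1 1
        rw [h1, hA (op x 1) (op x 1), hts x] at h
        exact h
      refine ⟨⟨⟨fun y => op 1 y, h1⟩, fun a b => by simpa using hM 1 1 a b⟩,
              ⟨⟨fun x => op x 1, h1⟩, fun a b => by simpa using hM a b 1 1⟩,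
              hbij 1, ?_, ?_, ?_, ?_⟩
      · intro x y
        exact hc x y
      · intro x
        exact hts x
      · intro x
        show op (op 1 x * x⁻¹ * op x 1) 1 = 1
        rw [hmul, hmul, hinv x,
            ← hc (op x 1) (op (op 1 x) 1 * (op x 1)⁻¹),
            ← mul_assoc, ← hkey x, mul_inv_cancel]
      · intro x y
        exact hA x y
    · rintro ⟨s, t, hbs, hc, hst, hker, hop⟩
      have hkey : ∀ i, t (s i) * t (t i) = t i := by
        intro i
        have h := hker i
        rw [map_mul, map_mul, map_inv, mul_assoc, ← hc (t i) ((t i)⁻¹),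
            ← mul_assoc] at h
        exact mul_inv_eq_one.mp h
      have main : ∀ (i b X : G), (∀ y, b * y = y * b) →
          t (t i) * b * (t (s i) * X) = t i * (b * X) := by
        intro i b X hb
        calc t (t i) * b * (t (s i) * X)
            = t (t i) * (b * t (s i) * X) := by rw [mul_assoc, mul_assoc b]
          _ = t (t i) * (t (s i) * b * X) := by rw [hb (t (s i))]
          _ = t (t i) * t (s i) * (b * X) := by rw [mul_assoc (t (s i)), ← mul_assoc]
          _ = t (s i) * t (t i) * (b * X) := by rw [← hc (s i) (t (t i))]
          _ = t i * (b * X) := by rw [hkey i]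
      refine ⟨⟨?_, ?_⟩, ?_⟩
      · intro x
        have hx : op x = fun y => t x * s y := funext fun y => hop x y
        rw [hx]
        exact (Equiv.mulLeft (t x)).bijective.comp hbs
      · intro i j k
        simp only [hop, map_mul]
        rw [hst j, hst i]
        exact (main i (t (s j)) (s (s k)) (hc (s j))).symm
      · intro a b c d
        simp only [hop, map_mul]
        rw [mul_assoc, mul_assoc, ← mul_assoc (t b), hc b (s c), mul_assoc]
  · rintro ⟨-, hM⟩
    have e2 : ∀ x, op x x = op 1 x * op x 1 := fun x => by
      simpa using hM 1 x x 1
    constructor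
    · intro hq x
      have h2 := e2 x
      rw [hq] at h2
      exact eq_inv_mul_of_mul_eq h2.symm
    · intro hq x
      rw [e2 x, hq x, mul_inv_cancel_left]
end

section
/- Let A be an abelian group, g ∈ Aut(A), and define x ▷ y = x + g(y − x) on A (the affine crossed set (A,g)). Then the orbit of y under the inner group is y + Im(f), where f = id − g. In particular, (A,g) with A finite is indecomposable if and only if f = id − g is bijective. -/
/-!
Write `φ_x y = x - g x + g y` and `f = id - g`. The identity `φ_x y - y = f (x - y)` says that
every translation, hence every element of the inner group, preserves the cosets of `Im f`, while
`φ_{a + y} y = y + f a` reaches every point of `y + Im f` in one step.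

If `f` is not surjective, `Im f` and its complement are therefore both subracks. If `f` is
surjective, any two points are joined by a single translation; in a finite rack each `φ_a` is a
bijection of each half of a decomposition, so no decomposition can exist. For finite `A`,
surjectivity of `f` is bijectivity.
-/

open Function Set

def Equiv.Perm.fiberwise {α β : Type*} (p : α → β) : Subgroup (Equiv.Perm α) where
  carrier := {σ | ∀ x, p (σ x) = p x}
  one_mem' _ := rfl
  mul_mem' hσ hτ x := (hσ _).trans (hτ x)
  inv_mem' {σ} hσ x := by simpa using (hσ (σ⁻¹ x)).symm

theorem Set.MapsTo.mem_iff_of_finite {α : Type*} [Finite α] {e : α → α} {s : Set α}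
    (he : Injective e) (h : MapsTo e s s) (x : α) : e x ∈ s ↔ x ∈ s := by
  refine ⟨fun hx => ?_, fun hx => h hx⟩
  obtain ⟨w, hw, hwx⟩ := ((s.toFinite.injOn_iff_bijOn_of_mapsTo h).1 he.injOn).surjOn hx
  rwa [← he hwx]

section Rack

variable {X : Type*} [Finite X] {op : X → X → X}

theorem mem_iff_of_subrack_of_subrack_compl (hinj : ∀ a, Injective (op a)) {Y : Set X}
    (hY : ∀ a ∈ Y, ∀ b ∈ Y, op a b ∈ Y) (hYc : ∀ a ∈ Yᶜ, ∀ b ∈ Yᶜ, op a b ∈ Yᶜ)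
    (a x : X) : op a x ∈ Y ↔ x ∈ Y := by
  by_cases ha : a ∈ Y
  · exact MapsTo.mem_iff_of_finite (hinj a) (hY a ha) x
  · exact not_iff_not.1 (MapsTo.mem_iff_of_finite (hinj a) (hYc a ha) x)

theorem rackIndecomposable_of_forall_exists_eq (hinj : ∀ a, Injective (op a))
    (htrans : ∀ y z, ∃ a, op a y = z) : RackIndecomposable X op := by
  rintro ⟨Y, ⟨y, hy⟩, ⟨z, hz⟩, hY, hYc⟩
  obtain ⟨a, rfl⟩ := htrans y z
  exact hz ((mem_iff_of_subrack_of_subrack_compl hinj hY hYc a y).2 hy)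

end Rack

theorem not_rackIndecomposable_of_sub_mem {A : Type*} [AddCommGroup A] {op : A → A → A}
    {H : AddSubgroup A} (hH : H ≠ ⊤) (hop : ∀ a b, op a b - b ∈ H) :
    ¬ RackIndecomposable A op := by
  have hmem (a b : A) : op a b ∈ H ↔ b ∈ H := by
    simpa using H.add_mem_cancel_left (y := b) (hop a b)
  obtain ⟨t, ht⟩ : ∃ t, t ∉ H := by
    by_contra! h
    exact hH ((AddSubgroup.eq_top_iff' H).2 h)
  exact fun h => h ⟨H, ⟨0, H.zero_mem⟩, ⟨t, ht⟩, fun a _ b hb => (hmem a b).2 hb,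
    fun a _ b hb => mt (hmem a b).1 hb⟩

namespace AddEquiv

variable {A : Type*} [AddCommGroup A] (g : A ≃+ A)

def idSub : A →+ A := AddMonoidHom.id A - g.toAddMonoidHom

@[simp]
theorem idSub_apply (a : A) : g.idSub a = a - g a := rfl

def affineOp (x y : A) : A := x - g x + g y

theorem affineOp_sub_self (x y : A) : g.affineOp x y - y = g.idSub (x - y) := by
  simp only [affineOp, idSub_apply, map_sub]
  abel

theorem affineOp_add_self (a y : A) : g.affineOp (a + y) y = y + g.idSub a := by
  rw [← sub_eq_iff_eq_add', affineOp_sub_self, add_sub_cancel_right]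

theorem affineOp_injective (x : A) : Injective (g.affineOp x) :=
  fun _ _ h => g.injective (add_left_cancel h)

theorem closure_range_affine_le_fiberwise :
    Subgroup.closure (range fun x : A => g.toEquiv.trans (Equiv.addLeft (x - g x))) ≤
      Equiv.Perm.fiberwise (QuotientAddGroup.mk : A → A ⧸ g.idSub.range) := by
  rw [Subgroup.closure_le]
  rintro _ ⟨x, rfl⟩ z
  exact QuotientAddGroup.eq_iff_sub_mem.2 ⟨x - z, (g.affineOp_sub_self x z).symm⟩

end AddEquiv

/-- In the affine crossed set `(A, g)` with `x ▷ y = x - g x + g y = x + g (y - x)`,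
the orbit of `y` under the inner group (generated by the translations
`φ_x = (add (x - g x)) ∘ g`) is `y + Im (id - g)`; in particular for finite `A`
the affine crossed set is indecomposable iff `id - g` is bijective. -/
theorem affine_orbits {A : Type*} [AddCommGroup A] (g : A ≃+ A) :
    (∀ y : A,
      {b : A | ∃ σ ∈ Subgroup.closure
          (Set.range fun x : A => g.toEquiv.trans (Equiv.addLeft (x - g x))),
        σ y = b} =
      {b : A | ∃ a : A, b = y + (a - g a)}) ∧
    (Finite A →
      (RackIndecomposable A (fun x y => x - g x + g y) ↔
        Function.Bijective fun a : A => a - g a)) := by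
  refine ⟨fun y => Set.ext fun b => ⟨?_, ?_⟩, fun _ => ?_⟩
  · rintro ⟨σ, hσ, rfl⟩
    obtain ⟨a, ha⟩ :=
      QuotientAddGroup.eq_iff_sub_mem.1 (g.closure_range_affine_le_fiberwise hσ y)
    exact ⟨a, eq_add_of_sub_eq' ha.symm⟩
  · rintro ⟨a, rfl⟩
    exact ⟨_, Subgroup.subset_closure ⟨a + y, rfl⟩, g.affineOp_add_self a y⟩
  rw [← Finite.injective_iff_bijective, Finite.injective_iff_surjective]
  constructor
  · intro hind
    by_contra hsurj
    exact not_rackIndecomposable_of_sub_mem (H := g.idSub.range)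
      (fun h => hsurj (AddMonoidHom.range_eq_top.1 h))
      (fun a b => ⟨a - b, (g.affineOp_sub_self a b).symm⟩) hind
  · intro hsurj
    refine rackIndecomposable_of_forall_exists_eq g.affineOp_injective fun y z => ?_
    obtain ⟨a, ha : a - g a = z - y⟩ := hsurj (z - y)
    refine ⟨a + y, (g.affineOp_add_self a y).trans ?_⟩
    rw [AddEquiv.idSub_apply, ha, add_sub_cancel]
end

section
/- Let (A, g) and (B, h) be indecomposable finite affine crossed sets. Then any isomorphism of crossed sets U : (A,g) → (B,h) can be uniquely written as U = τ_b ∘ T, where τ_b(x) = x + b is a translation of B and T : A → B is a group isomorphism satisfying T g = h T. In particular (A,g) ≅ (B,h) as crossed sets if and only if there is a group isomorphism T : A → B with T g = h T. -/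
/-- Indecomposability forces surjectivity of `x ↦ x - g x`. -/
lemma aux_f_surj {A : Type*} [AddCommGroup A] (g : A ≃+ A)
    (hA : RackIndecomposable A (fun x y => x - g x + g y)) :
    Function.Surjective (fun x : A => x - g x) := by
  by_contra hns
  rw [Function.Surjective] at hns
  push_neg at hns
  obtain ⟨z, hz⟩ := hns
  apply hA
  refine ⟨Set.range (fun x : A => x - g x), ⟨0, 0, by simp⟩,
    ⟨z, fun ⟨x, hx⟩ => hz x hx⟩, ?_, ?_⟩
  · rintro a ⟨u, rfl⟩ b ⟨v, rfl⟩
    refine ⟨(u - g u) + g v, ?_⟩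
    simp only [map_add, map_sub]
    abel
  · rintro a ha b hb ⟨w, hw⟩
    apply hb
    refine ⟨g.symm (w - a), ?_⟩
    have h1 : g (g.symm (w - a)) = w - a := g.apply_symm_apply _
    simp only at hw ⊢
    rw [h1]
    have : g b = w - g w - (a - g a) := by
      rw [hw]; abel
    have hb' : b = g.symm (w - g w - (a - g a)) := by
      rw [← this, g.symm_apply_apply]
    rw [hb']
    simp only [map_sub, g.symm_apply_apply]
    abel

/-- For indecomposable finite affine crossed sets `(A,g)` and `(B,h)`, every crossed set
isomorphism `U : (A,g) → (B,h)` is uniquely `U = τ_b ∘ T` with `T : A → B` a group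
isomorphism satisfying `T g = h T`; and `(A,g) ≅ (B,h)` iff such a `T` exists. -/
theorem affine_iso_decomposition {A B : Type*} [AddCommGroup A] [AddCommGroup B]
    [Finite A] [Finite B] (g : A ≃+ A) (h : B ≃+ B)
    (hA : RackIndecomposable A (fun x y => x - g x + g y))
    (hB : RackIndecomposable B (fun x y => x - h x + h y)) :
    (∀ U : A ≃ B, (∀ x y, U (x - g x + g y) = U x - h (U x) + h (U y)) →
      ∃! p : B × (A ≃+ B),
        (∀ a, p.2 (g a) = h (p.2 a)) ∧ ∀ a, U a = p.2 a + p.1) ∧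
    ((∃ U : A ≃ B, ∀ x y, U (x - g x + g y) = U x - h (U x) + h (U y)) ↔
      ∃ T : A ≃+ B, ∀ a, T (g a) = h (T a)) := by
  have fsurj := aux_f_surj g hA
  have main : ∀ U : A ≃ B, (∀ x y, U (x - g x + g y) = U x - h (U x) + h (U y)) →
      ∃! p : B × (A ≃+ B),
        (∀ a, p.2 (g a) = h (p.2 a)) ∧ ∀ a, U a = p.2 a + p.1 := by
    intro U hU
    set b : B := U 0 with hb
    -- the translated map is additive
    have hadd : ∀ u v : A, U (u + v) - b = (U u - b) + (U v - b) := by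
      intro u v
      obtain ⟨x, hx⟩ := fsurj u
      obtain ⟨y, hy⟩ := g.surjective v
      subst hx
      rw [← hy]
      have e1 := hU x y
      have e2 := hU x 0
      have e3 := hU 0 y
      simp only [map_zero, add_zero, zero_sub, neg_zero, zero_add, sub_zero] at e2 e3
      -- e2 : U (x - g x) = U x - h (U x) + h (U 0)
      -- e3 : U (g y) = U 0 - h (U 0) + h (U y)
      rw [e1, e2, e3, ← hb]
      abel
    have hT0 : ∀ a : A, U a - b = U a - b := fun _ => rfl
    let T : A ≃+ B :=
      { toEquiv := U.trans (Equiv.subRight b)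
        map_add' := by
          intro u v
          simpa using hadd u v }
    have hTdef : ∀ a, T a = U a - b := fun _ => rfl
    have hTg : ∀ a, T (g a) = h (T a) := by
      intro a
      have e3 := hU 0 a
      simp only [map_zero, zero_sub, neg_zero, zero_add, add_zero, sub_zero] at e3
      rw [hTdef, hTdef, e3, ← hb, map_sub]
      abel
    refine ⟨(b, T), ⟨hTg, fun a => by rw [hTdef]; abel⟩, ?_⟩
    rintro ⟨b', T'⟩ ⟨h1, h2⟩
    have hb' : b' = b := by
      have := h2 0
      simpa [hb] using this.symm
    subst hb'
    have hTT : T' = T := by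
      ext a
      have := h2 a
      rw [hTdef]
      rw [this]
      abel
    rw [hTT]
  refine ⟨main, ?_, ?_⟩
  · rintro ⟨U, hU⟩
    obtain ⟨⟨b, T⟩, ⟨h1, _⟩, _⟩ := main U hU
    exact ⟨T, h1⟩
  · rintro ⟨T, hT⟩
    refine ⟨T.toEquiv, fun x y => ?_⟩
    simp [map_add, map_sub, hT]
end

section
/- If (A, g) is an indecomposable finite affine crossed set, then the automorphism group of (A,g) as a crossed set is the semidirect product A ⋊ Aut(A)^g, where Aut(A)^g = {T ∈ Aut(A) : Tg = gT} and A acts by translations. -/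
/-- The automorphism group of an indecomposable finite affine crossed set `(A,g)` is the
semidirect product `A ⋊ Aut(A)^g`: there is a bijection `e` sending a pair
`(b, T)` (with `T` a group automorphism commuting with `g`) to the crossed set
automorphism `x ↦ T x + b`, and composition corresponds to the semidirect product law
`(b, T) (c, S) = (b + T c, T S)`. -/
theorem affine_aut_group {A : Type*} [AddCommGroup A] [Finite A] (g : A ≃+ A)
    (hind : RackIndecomposable A (fun x y => x - g x + g y)) :
    ∃ e : A × {T : A ≃+ A // ∀ a, T (g a) = g (T a)} ≃
        {U : A ≃ A // ∀ x y, U (x - g x + g y) = U x - g (U x) + g (U y)},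
      (∀ p a, (e p).1 a = p.2.1 a + p.1) ∧
      ∀ p q a, (e p).1 ((e q).1 a) = p.2.1 (q.2.1 a) + (p.2.1 q.1 + p.1) := by
  classical
  -- The additive map `x ↦ x - g x`.
  set h : A →+ A :=
    { toFun := fun x => x - g x
      map_zero' := by simp
      map_add' := fun a b => by simp only [map_add]; abel } with hh
  -- indecomposability implies `id - g` is surjective
  have hsurj : Function.Surjective (fun x : A => x - g x) := by
    by_contra hns
    rw [Function.Surjective] at hns
    push_neg at hns
    obtain ⟨c, hc⟩ := hns
    apply hind
    have hcr : c ∉ h.range := by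
      rintro ⟨x, hx⟩
      exact hc x hx
    have hgmem : ∀ b : A, b ∈ h.range → g b ∈ h.range := by
      intro b hb
      have : g b = b - h b := by simp [hh]
      rw [this]
      exact sub_mem hb ⟨b, rfl⟩
    refine ⟨(h.range : Set A), ⟨0, ⟨0, by simp [hh]⟩⟩, ⟨c, hcr⟩, ?_, ?_⟩
    · intro a ha b hb
      exact add_mem (⟨a, rfl⟩ : a - g a ∈ h.range) (hgmem b hb)
    · intro a ha b hb
      simp only [Set.mem_compl_iff, SetLike.mem_coe] at ha hb ⊢
      intro hmem
      have hgb : g b ∈ h.range := by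
        have : g b = (a - g a + g b) - h a := by
          change g b = (a - g a + g b) - (a - g a); abel
        rw [this]
        exact sub_mem hmem ⟨a, rfl⟩
      have : b ∈ h.range := by
        have hb' : b = g b + h b := by simp [hh]
        rw [hb']
        exact add_mem hgb ⟨b, rfl⟩
      exact hb this
  -- the forward map
  set F : A × {T : A ≃+ A // ∀ a, T (g a) = g (T a)} →
      {U : A ≃ A // ∀ x y, U (x - g x + g y) = U x - g (U x) + g (U y)} :=
    fun p =>
      ⟨(p.2.1.toEquiv).trans (Equiv.addRight p.1), by
        intro x y
        show p.2.1 (x - g x + g y) + p.1 =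
          (p.2.1 x + p.1) - g (p.2.1 x + p.1) + g (p.2.1 y + p.1)
        simp only [map_add, map_sub, p.2.2]
        abel⟩ with hF
  have hF1 : ∀ p a, (F p).1 a = p.2.1 a + p.1 := fun p a => rfl
  have hFinj : Function.Injective F := by
    intro p q hpq
    have key : ∀ a, p.2.1 a + p.1 = q.2.1 a + q.1 := by
      intro a
      rw [← hF1 p a, ← hF1 q a, hpq]
    have h0 := key 0
    simp only [map_zero, zero_add] at h0
    have hT : p.2.1 = q.2.1 := by
      ext a
      have := key a
      rw [h0] at this
      exact add_right_cancel this
    obtain ⟨p1, p2⟩ := p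
    obtain ⟨q1, q2⟩ := q
    simp only [Prod.mk.injEq]
    exact ⟨h0, Subtype.ext hT⟩
  have hFsurj : Function.Surjective F := by
    rintro ⟨U, hU⟩
    -- basic identities
    have hg0 : ∀ y, U (g y) = U 0 - g (U 0) + g (U y) := by
      intro y
      have := hU 0 y
      simpa using this
    have hx0 : ∀ x, U (x - g x) = U x - g (U x) + g (U 0) := by
      intro x
      have := hU x 0
      simpa using this
    have hadd : ∀ u v, U (u + v) = U u + U v - U 0 := by
      intro u v
      obtain ⟨x, hxu⟩ := hsurj u
      have hgy : g (g.symm v) = v := g.apply_symm_apply v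
      have h1 := hU x (g.symm v)
      rw [hgy] at h1
      simp only at hxu
      rw [hxu] at h1
      -- h1 : U (u + v) = U x - g (U x) + g (U (g.symm v))
      have h2 := hx0 x
      rw [hxu] at h2
      -- h2 : U u = U x - g (U x) + g (U 0)
      have h3 := hg0 (g.symm v)
      rw [hgy] at h3
      -- h3 : U v = U 0 - g (U 0) + g (U (g.symm v))
      have h2' : U x - g (U x) = U u - g (U 0) := by rw [h2]; abel
      have h3' : g (U (g.symm v)) = U v - U 0 + g (U 0) := by rw [h3]; abel
      rw [h1, h2', h3']
      abel
    set Teq : A ≃ A := U.trans (Equiv.subRight (U 0)) with hTeq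
    have hTeqa : ∀ a, Teq a = U a - U 0 := fun a => rfl
    set T : A ≃+ A := AddEquiv.mk' Teq (by
      intro a b
      simp only [hTeqa]
      rw [hadd]
      abel) with hT
    have hTa : ∀ a, T a = U a - U 0 := fun a => rfl
    have hcomm : ∀ a, T (g a) = g (T a) := by
      intro a
      simp only [hTa, map_sub]
      rw [hg0]
      abel
    refine ⟨⟨U 0, ⟨T, hcomm⟩⟩, ?_⟩
    apply Subtype.ext
    apply Equiv.ext
    intro a
    show T a + U 0 = U a
    rw [hTa]
    abel
  refine ⟨Equiv.ofBijective F ⟨hFinj, hFsurj⟩, fun p a => rfl, ?_⟩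
  intro p q a
  show (F p).1 ((F q).1 a) = _
  rw [hF1, hF1, map_add, add_assoc]
end

section
/- Let X be a rack, A an abelian group, η : X × X → Aut(A) and τ : X × X → End(A) families of maps, and define α_{ij}(s,t) = η_{ij}(t) + τ_{ij}(s). Then α is a dynamical cocycle (so X ×_α A is a rack) if and only if for all i,j,k ∈ X: η_{i,j▷k} η_{j,k} = η_{i▷j,i▷k} η_{i,k}; τ_{i,j▷k} = η_{i▷j,i▷k} τ_{i,k} + τ_{i▷j,i▷k} τ_{i,j}; and η_{i,j▷k} τ_{j,k} = τ_{i▷j,i▷k} η_{i,j}. -/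
/-- For a rack `X`, an abelian group `A`, automorphisms `η i j` and endomorphisms
`τ i j`, the map `α i j (s,t) = η i j t + τ i j s` is a dynamical cocycle (each
`α i j s` bijective and the cocycle identity) iff `(η, τ)` satisfies the three
`X`-module conditions. -/
theorem module_iff_dynamical_cocycle {X A : Type*} [AddCommGroup A]
    (op : X → X → X) (h : IsRack X op)
    (η : X → X → A ≃+ A) (τ : X → X → A →+ A) :
    ((∀ i j s, Function.Bijective fun t : A => η i j t + τ i j s) ∧
      ∀ i j k (s t u : A),
        η i (op j k) (η j k u + τ j k t) + τ i (op j k) s =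
          η (op i j) (op i k) (η i k u + τ i k s) +
            τ (op i j) (op i k) (η i j t + τ i j s)) ↔
    ((∀ i j k (a : A), η i (op j k) (η j k a) = η (op i j) (op i k) (η i k a)) ∧
      (∀ i j k (a : A), τ i (op j k) a =
        η (op i j) (op i k) (τ i k a) + τ (op i j) (op i k) (τ i j a)) ∧
      (∀ i j k (a : A),
        η i (op j k) (τ j k a) = τ (op i j) (op i k) (η i j a))) := by
  constructor
  · rintro ⟨-, hc⟩
    refine ⟨fun i j k a => ?_, fun i j k a => ?_, fun i j k a => ?_⟩
    · simpa using hc i j k 0 0 a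
    · simpa using hc i j k a 0 0
    · simpa [add_comm] using hc i j k 0 a 0
  · rintro ⟨h1, h2, h3⟩
    constructor
    · intro i j s
      have : (fun t : A => η i j t + τ i j s) =
          (Equiv.addRight (τ i j s)) ∘ (η i j) := rfl
      rw [this]
      exact (Equiv.addRight (τ i j s)).bijective.comp (η i j).bijective
    · intro i j k s t u
      simp only [map_add, h1 i j k u, h2 i j k s, h3 i j k t]
      abel
end

section
/- Let X be a rack, A an X-module (with structure maps η_{ij} ∈ Aut(A), τ_{ij} ∈ End(A)), and κ : X × X → A a family of elements. Define α_{ij}(s,t) = η_{ij}(t) + τ_{ij}(s) + κ_{ij}. Then α is a dynamical cocycle if and only if κ satisfies the 2-cocycle condition η_{i,j▷k}(κ_{jk}) + κ_{i,j▷k} = η_{i▷j,i▷k}(κ_{ik}) + τ_{i▷j,i▷k}(κ_{ij}) + κ_{i▷j,i▷k} for all i,j,k ∈ X. -/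
/-- Let `X` be a rack and `A` an `X`-module with structure maps `η` (automorphisms) and
`τ` (endomorphisms), and `κ : X × X → A`.  Then `α i j (s,t) = η i j t + τ i j s + κ i j`
is a dynamical cocycle iff `κ` satisfies the rack `2`-cocycle condition. -/
theorem affine_module_iff_two_cocycle {X A : Type*} [AddCommGroup A]
    (op : X → X → X) (h : IsRack X op)
    (η : X → X → A ≃+ A) (τ : X → X → A →+ A) (κ : X → X → A)
    (hη : ∀ i j k (a : A), η i (op j k) (η j k a) = η (op i j) (op i k) (η i k a))
    (hτ : ∀ i j k (a : A), τ i (op j k) a =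
      η (op i j) (op i k) (τ i k a) + τ (op i j) (op i k) (τ i j a))
    (hητ : ∀ i j k (a : A),
      η i (op j k) (τ j k a) = τ (op i j) (op i k) (η i j a)) :
    ((∀ i j s, Function.Bijective fun t : A => η i j t + τ i j s + κ i j) ∧
      ∀ i j k (s t u : A),
        η i (op j k) (η j k u + τ j k t + κ j k) + τ i (op j k) s + κ i (op j k) =
          η (op i j) (op i k) (η i k u + τ i k s + κ i k) +
            τ (op i j) (op i k) (η i j t + τ i j s + κ i j) +
            κ (op i j) (op i k)) ↔
    (∀ i j k, η i (op j k) (κ j k) + κ i (op j k) =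
      η (op i j) (op i k) (κ i k) + τ (op i j) (op i k) (κ i j) +
        κ (op i j) (op i k)) := by
  constructor
  · rintro ⟨-, H⟩ i j k
    have := H i j k 0 0 0
    simpa using this
  · intro H
    refine ⟨fun i j s => ?_, fun i j k s t u => ?_⟩
    · exact (((η i j).toEquiv.trans (Equiv.addRight (τ i j s))).trans
        (Equiv.addRight (κ i j))).bijective
    · rw [map_add, map_add, hη i j k u, hητ i j k t, hτ i j k s,
        map_add, map_add, map_add, map_add]
      linear_combination (norm := abel1) H i j k
end
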